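/- arXiv:1301.5635 — 2 statements merged into one kernel-verified Lean document; each statement's English description precedes it below -/
import Mathlib

section
/- For all ν ≥ 1/2 and x > 0, M_ν(x) ≥ (Γ(ν+1/2)/Γ(ν+1)) · (1 - e^(-x))/x, where M_ν(x) = (2/√π) ∫₀¹ (1-t²)^(ν-1/2) e^(-xt) dt. The inequality is reversed when |ν| < 1/2. -/
/-!
On `(0, 1)` the weight `f t = (1 - t²)^(ν - 1/2)` is decreasing when `ν ≥ 1/2` and increasing when
`|ν| < 1/2`, while `g t = e^(-xt)` is decreasing for `x > 0`. Chebyshev's integral inequality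
(integrate `(f s - f t) (g s - g t)`, which has constant sign, over the square) therefore compares
`∫ f g` with `∫ f · ∫ g` in the two directions. Finally `∫ g = (1 - e^(-x))/x`, and the
substitution `u = t²` turns `∫ f` into the Beta integral `B(1/2, ν + 1/2)/2`, so that
`∫ f = (√π/2) Γ(ν + 1/2)/Γ(ν + 1)`.
-/

open Real MeasureTheory intervalIntegral

noncomputable def strM (ν x : ℝ) : ℝ :=
  2 / Real.sqrt Real.pi * ∫ t in (0:ℝ)..1, (1 - t ^ 2) ^ (ν - 1 / 2) * Real.exp (-x * t)

open Set

section Chebyshev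

variable {α : Type*} [MeasurableSpace α] {μ : Measure α} {s : Set α} {f g : α → ℝ}

theorem MonovaryOn.setIntegral_mul_setIntegral_le (h : MonovaryOn f g s) (hs : MeasurableSet s)
    (hμs : μ s ≠ ⊤) (hf : IntegrableOn f s μ) (hg : IntegrableOn g s μ)
    (hfg : IntegrableOn (fun x => f x * g x) s μ) :
    (∫ x in s, f x ∂μ) * (∫ x in s, g x ∂μ) ≤ μ.real s * ∫ x in s, f x * g x ∂μ := by
  have : IsFiniteMeasure (μ.restrict s) := isFiniteMeasure_restrict.2 hμs
  set F := ∫ x in s, f x ∂μ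
  set G := ∫ x in s, g x ∂μ
  set H := ∫ x in s, f x * g x ∂μ
  have inner : ∀ y ∈ s, g y * F + f y * G ≤ H + μ.real s * (f y * g y) := by
    intro y hy
    have hnonneg : 0 ≤ ∫ x in s, (f x - f y) * (g x - g y) ∂μ :=
      setIntegral_nonneg hs fun x hx => h.sub_mul_sub_nonneg hy hx
    have hexpand : ∫ x in s, (f x - f y) * (g x - g y) ∂μ
        = H - g y * F - (f y * G - μ.real s * (f y * g y)) := by
      have e : ∀ x, (f x - f y) * (g x - g y)
          = (f x * g x - g y * f x) - (f y * g x - f y * g y) := fun x => by ring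
      simp_rw [e]
      rw [MeasureTheory.integral_sub, MeasureTheory.integral_sub, MeasureTheory.integral_sub,
        MeasureTheory.integral_const_mul, MeasureTheory.integral_const_mul, setIntegral_const,
        smul_eq_mul, mul_comm (μ.real s)]
      exacts [hg.const_mul _, integrableOn_const hμs, hfg, hf.const_mul _,
        hfg.sub (hf.const_mul _), (hg.const_mul _).sub (integrableOn_const hμs)]
    linarith
  have outer : ∫ y in s, (g y * F + f y * G) ∂μ ≤ ∫ y in s, (H + μ.real s * (f y * g y)) ∂μ :=
    setIntegral_mono_on ((hg.mul_const F).add (hf.mul_const G))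
      ((integrableOn_const hμs).add (hfg.const_mul _)) hs inner
  rw [MeasureTheory.integral_add, MeasureTheory.integral_add, MeasureTheory.integral_mul_const,
    MeasureTheory.integral_mul_const, MeasureTheory.integral_const_mul, setIntegral_const,
    smul_eq_mul] at outer
  · change G * F + F * G ≤ μ.real s * H + μ.real s * H at outer
    linarith
  exacts [integrableOn_const hμs, hfg.const_mul _, hg.mul_const F, hf.mul_const G]

theorem AntivaryOn.setIntegral_mul_le_setIntegral_mul_setIntegral (h : AntivaryOn f g s)
    (hs : MeasurableSet s) (hμs : μ s ≠ ⊤) (hf : IntegrableOn f s μ) (hg : IntegrableOn g s μ)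
    (hfg : IntegrableOn (fun x => f x * g x) s μ) :
    μ.real s * ∫ x in s, f x * g x ∂μ ≤ (∫ x in s, f x ∂μ) * (∫ x in s, g x ∂μ) := by
  have := (monovaryOn_neg_left.2 h).setIntegral_mul_setIntegral_le hs hμs hf.neg hg
    (by simp only [Pi.neg_apply, neg_mul]; exact hfg.neg)
  simpa only [Pi.neg_apply, neg_mul, MeasureTheory.integral_neg, mul_neg, neg_le_neg_iff] using this

end Chebyshev

lemma ofReal_rpow_mul_one_sub_rpow {a b x : ℝ} (hx₀ : 0 ≤ x) (hx₁ : x ≤ 1) :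
    ((x ^ (a - 1) * (1 - x) ^ (b - 1) : ℝ) : ℂ) =
      (x : ℂ) ^ ((a : ℂ) - 1) * (1 - (x : ℂ)) ^ ((b : ℂ) - 1) := by
  rw [Complex.ofReal_mul, Complex.ofReal_cpow hx₀, Complex.ofReal_cpow (sub_nonneg.2 hx₁)]
  push_cast
  rfl

theorem integrableOn_rpow_mul_one_sub_rpow {a b : ℝ} (ha : 0 < a) (hb : 0 < b) :
    IntegrableOn (fun x : ℝ => x ^ (a - 1) * (1 - x) ^ (b - 1)) (Ioo 0 1) := by
  have h := Complex.betaIntegral_convergent (u := a) (v := b) (by simpa) (by simpa)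
  rw [intervalIntegrable_iff_integrableOn_Ioo_of_le zero_le_one] at h
  refine IntegrableOn.congr_fun h.re (fun x hx => ?_) measurableSet_Ioo
  rw [← ofReal_rpow_mul_one_sub_rpow hx.1.le hx.2.le, RCLike.re_to_complex, Complex.ofReal_re]

theorem integral_rpow_mul_one_sub_rpow {a b : ℝ} (ha : 0 < a) (hb : 0 < b) :
    ∫ x in Ioo 0 1, x ^ (a - 1) * (1 - x) ^ (b - 1) = Gamma a * Gamma b / Gamma (a + b) := by
  have h := Complex.betaIntegral_convergent (u := a) (v := b) (by simpa) (by simpa)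
  rw [intervalIntegrable_iff_integrableOn_Ioo_of_le zero_le_one] at h
  rw [← ProbabilityTheory.beta, ProbabilityTheory.beta_eq_betaIntegralReal a b ha hb,
    Complex.betaIntegral, intervalIntegral.integral_of_le zero_le_one, integral_Ioc_eq_integral_Ioo,
    ← RCLike.re_to_complex, ← integral_re h]
  refine setIntegral_congr_fun measurableSet_Ioo fun x hx => ?_
  rw [← ofReal_rpow_mul_one_sub_rpow hx.1.le hx.2.le, RCLike.re_to_complex, Complex.ofReal_re]

lemma image_sq_Ioo_zero_one : (fun t : ℝ => t ^ 2) '' Ioo 0 1 = Ioo 0 1 := by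
  ext y
  constructor
  · rintro ⟨t, ⟨ht₀, ht₁⟩, rfl⟩
    exact ⟨by positivity, by nlinarith⟩
  · rintro ⟨hy₀, hy₁⟩
    exact ⟨√y, ⟨sqrt_pos.2 hy₀, (sqrt_lt' one_pos).2 (by simpa)⟩, sq_sqrt hy₀.le⟩

lemma abs_two_mul_mul_sq_rpow_half_sub_one {t : ℝ} (ht : 0 < t) (c : ℝ) :
    |2 * t| * ((t ^ 2) ^ ((1 / 2 : ℝ) - 1) * c) = 2 * c := by
  rw [abs_of_pos (by positivity), ← rpow_natCast, ← rpow_mul ht.le]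
  norm_num [rpow_neg_one]
  field_simp

lemma injOn_sq_Ioo_zero_one : InjOn (fun t : ℝ => t ^ 2) (Ioo 0 1) :=
  (pow_left_strictMonoOn₀ two_ne_zero).injOn.mono fun _ ht => ht.1.le

lemma hasDerivWithinAt_sq (s : Set ℝ) (t : ℝ) :
    HasDerivWithinAt (fun t : ℝ => t ^ 2) (2 * t) s t := by
  simpa using (hasDerivAt_pow 2 t).hasDerivWithinAt

theorem integral_beta_eq_two_mul_integral_one_sub_sq_rpow (p : ℝ) :
    ∫ x in Ioo (0 : ℝ) 1, x ^ ((1 / 2 : ℝ) - 1) * (1 - x) ^ p =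
      2 * ∫ t in Ioo (0 : ℝ) 1, (1 - t ^ 2) ^ p := by
  conv_lhs => rw [← image_sq_Ioo_zero_one]
  rw [integral_image_eq_integral_abs_deriv_smul measurableSet_Ioo
    (fun t _ => hasDerivWithinAt_sq _ t) injOn_sq_Ioo_zero_one, ← MeasureTheory.integral_const_mul]
  exact setIntegral_congr_fun measurableSet_Ioo fun t ht =>
    abs_two_mul_mul_sq_rpow_half_sub_one ht.1 _

theorem integrableOn_one_sub_sq_rpow {p : ℝ} (hp : -1 < p) :
    IntegrableOn (fun t : ℝ => (1 - t ^ 2) ^ p) (Ioo 0 1) := by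
  have h := integrableOn_rpow_mul_one_sub_rpow (a := 1 / 2) (b := p + 1) (by norm_num) (by linarith)
  rw [add_sub_cancel_right, ← image_sq_Ioo_zero_one,
    integrableOn_image_iff_integrableOn_abs_deriv_smul measurableSet_Ioo
      (fun t _ => hasDerivWithinAt_sq _ t) injOn_sq_Ioo_zero_one] at h
  have h₂ := h.congr_fun (fun t ht => abs_two_mul_mul_sq_rpow_half_sub_one ht.1 _) measurableSet_Ioo
  simpa [IntegrableOn] using h₂.div_const 2

theorem integral_one_sub_sq_rpow {p : ℝ} (hp : -1 < p) :
    ∫ t in Ioo (0 : ℝ) 1, (1 - t ^ 2) ^ p = √π * Gamma (p + 1) / Gamma (p + 3 / 2) / 2 := by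
  have h := integral_rpow_mul_one_sub_rpow (a := 1 / 2) (b := p + 1) (by norm_num) (by linarith)
  rw [add_sub_cancel_right, integral_beta_eq_two_mul_integral_one_sub_sq_rpow, Gamma_one_half_eq,
    show 1 / 2 + (p + 1) = p + 3 / 2 by ring] at h
  rw [← h]
  ring

theorem strM_eq_setIntegral (ν x : ℝ) :
    strM ν x = 2 / √π * ∫ t in Ioo (0 : ℝ) 1, (1 - t ^ 2) ^ (ν - 1 / 2) * exp (-x * t) := by
  rw [strM, intervalIntegral.integral_of_le zero_le_one, integral_Ioc_eq_integral_Ioo]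

theorem strM_zero {ν : ℝ} (hν : -(1 / 2) < ν) : strM ν 0 = Gamma (ν + 1 / 2) / Gamma (ν + 1) := by
  simp only [strM_eq_setIntegral, neg_zero, zero_mul, exp_zero, mul_one]
  rw [integral_one_sub_sq_rpow (by linarith), show ν - 1 / 2 + 1 = ν + 1 / 2 by ring,
    show ν - 1 / 2 + 3 / 2 = ν + 1 by ring]
  field_simp

theorem setIntegral_exp_neg_mul {x : ℝ} (hx : x ≠ 0) :
    ∫ t in Ioo (0 : ℝ) 1, exp (-x * t) = (1 - exp (-x)) / x := by
  rw [← integral_Ioc_eq_integral_Ioo, ← intervalIntegral.integral_of_le zero_le_one,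
    intervalIntegral.integral_comp_mul_left (fun t => exp t) (neg_ne_zero.2 hx), integral_exp]
  simp only [smul_eq_mul, mul_zero, mul_one, exp_zero]
  field_simp
  ring

theorem antitoneOn_one_sub_sq_rpow {p : ℝ} (hp : 0 ≤ p) :
    AntitoneOn (fun t : ℝ => (1 - t ^ 2) ^ p) (Icc 0 1) :=
  fun s hs t ht hst => rpow_le_rpow (by nlinarith [ht.1, ht.2]) (by nlinarith [hs.1]) hp

theorem monotoneOn_one_sub_sq_rpow {p : ℝ} (hp : p ≤ 0) :
    MonotoneOn (fun t : ℝ => (1 - t ^ 2) ^ p) (Ico 0 1) :=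
  fun s hs t ht hst => rpow_le_rpow_of_nonpos (by nlinarith [ht.1, ht.2]) (by nlinarith [hs.1]) hp

theorem antitone_exp_neg_mul {x : ℝ} (hx : 0 ≤ x) : Antitone fun t : ℝ => exp (-x * t) :=
  fun _ _ hst => exp_le_exp.2 (by nlinarith)

theorem integrableOn_one_sub_sq_rpow_mul_exp {p : ℝ} (hp : -1 < p) (x : ℝ) :
    IntegrableOn (fun t : ℝ => (1 - t ^ 2) ^ p * exp (-x * t)) (Ioo 0 1) :=
  (integrableOn_one_sub_sq_rpow hp).mul_continuousOn_of_subset (by fun_prop) measurableSet_Ioo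
    isCompact_Icc Ioo_subset_Icc_self

theorem integrableOn_exp_neg_mul (x : ℝ) : IntegrableOn (fun t : ℝ => exp (-x * t)) (Ioo 0 1) :=
  (by fun_prop : Continuous fun t : ℝ => exp (-x * t)).integrableOn_Icc.mono_set
    Ioo_subset_Icc_self

theorem setIntegral_mul_setIntegral_le_one_sub_sq_rpow_mul_exp {p x : ℝ} (hp : 0 ≤ p)
    (hx : 0 ≤ x) :
    (∫ t in Ioo (0 : ℝ) 1, (1 - t ^ 2) ^ p) * (∫ t in Ioo (0 : ℝ) 1, exp (-x * t)) ≤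
      ∫ t in Ioo (0 : ℝ) 1, (1 - t ^ 2) ^ p * exp (-x * t) := by
  have h := (((antitoneOn_one_sub_sq_rpow hp).mono Ioo_subset_Icc_self).monovaryOn
    ((antitone_exp_neg_mul hx).antitoneOn _)).setIntegral_mul_setIntegral_le measurableSet_Ioo
    measure_Ioo_lt_top.ne (integrableOn_one_sub_sq_rpow (by linarith)) (integrableOn_exp_neg_mul x)
    (integrableOn_one_sub_sq_rpow_mul_exp (by linarith) x)
  rwa [Real.volume_real_Ioo_of_le zero_le_one, sub_zero, one_mul] at h

theorem setIntegral_one_sub_sq_rpow_mul_exp_le_mul_setIntegral {p x : ℝ} (hp₀ : -1 < p)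
    (hp : p ≤ 0) (hx : 0 ≤ x) :
    ∫ t in Ioo (0 : ℝ) 1, (1 - t ^ 2) ^ p * exp (-x * t) ≤
      (∫ t in Ioo (0 : ℝ) 1, (1 - t ^ 2) ^ p) * (∫ t in Ioo (0 : ℝ) 1, exp (-x * t)) := by
  have h := (((monotoneOn_one_sub_sq_rpow hp).mono Ioo_subset_Ico_self).antivaryOn
    ((antitone_exp_neg_mul hx).antitoneOn _)).setIntegral_mul_le_setIntegral_mul_setIntegral
    measurableSet_Ioo measure_Ioo_lt_top.ne (integrableOn_one_sub_sq_rpow hp₀)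
    (integrableOn_exp_neg_mul x) (integrableOn_one_sub_sq_rpow_mul_exp hp₀ x)
  rwa [Real.volume_real_Ioo_of_le zero_le_one, sub_zero, one_mul] at h

theorem Gamma_div_Gamma_mul_eq {ν x : ℝ} (hν : -(1 / 2) < ν) (hx : x ≠ 0) :
    Gamma (ν + 1 / 2) / Gamma (ν + 1) * ((1 - exp (-x)) / x) =
      2 / √π * ((∫ t in Ioo (0 : ℝ) 1, (1 - t ^ 2) ^ (ν - 1 / 2)) *
        ∫ t in Ioo (0 : ℝ) 1, exp (-x * t)) := by
  rw [← strM_zero hν, strM_eq_setIntegral, ← setIntegral_exp_neg_mul hx]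
  simp only [neg_zero, zero_mul, exp_zero, mul_one, mul_assoc]

theorem strM_chebyshev_bound (ν x : ℝ) (hx : 0 < x) :
    (1 / 2 ≤ ν →
      strM ν x ≥ Real.Gamma (ν + 1 / 2) / Real.Gamma (ν + 1) * ((1 - Real.exp (-x)) / x)) ∧
    (|ν| < 1 / 2 →
      strM ν x ≤ Real.Gamma (ν + 1 / 2) / Real.Gamma (ν + 1) * ((1 - Real.exp (-x)) / x)) := by
  refine ⟨fun hν => ?_, fun hν => ?_⟩
  · rw [ge_iff_le, Gamma_div_Gamma_mul_eq (by linarith) hx.ne', strM_eq_setIntegral]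
    gcongr
    exact setIntegral_mul_setIntegral_le_one_sub_sq_rpow_mul_exp (by linarith) hx.le
  · obtain ⟨hν₀, hν₁⟩ := abs_lt.1 hν
    rw [Gamma_div_Gamma_mul_eq (by linarith) hx.ne', strM_eq_setIntegral]
    gcongr
    exact setIntegral_one_sub_sq_rpow_mul_exp_le_mul_setIntegral (by linarith) (by linarith) hx.le
end

section
/- For all ν ≥ 3/2 and x > 0, M_{ν-1}(x) · M_{ν+1}(x) ≤ M_{1/2}(x) · M_{2ν-1/2}(x), and the inequality is reversed for ν ∈ (1/2, 3/2), where M_ν(x) = (2/√π) ∫₀¹ (1-t²)^(ν-1/2) e^(-xt) dt. -/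
open Real MeasureTheory intervalIntegral

/-!
Let `ρ = e^{-xt} dt` on `(0, 1)` and `I(α) = ∫ (1 - t²)^α dρ`. Then `M_ν(x) = (2/√π) I(ν - 1/2)`
and `M_{1/2}(x) = (2/√π) ρ(0, 1)`, so with `a = ν - 3/2`, `b = ν + 1/2` the claim is Chebyshev's
integral inequality `I(a) I(b) ≤ ρ(0, 1) I(a + b)` for the functions `(1 - t²)^a`, `(1 - t²)^b`,
which monovary when `a ≥ 0` and antivary (reversing the inequality) when `a ≤ 0`. Chebyshev's
inequality follows by integrating `(f t - f s) (g t - g s)`, which has a constant sign, against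
`ρ ⊗ ρ`.
-/

open Set

section Chebyshev

variable {α : Type*} [MeasurableSpace α] {μ : Measure α} [IsFiniteMeasure μ] {f g : α → ℝ}
  {s : Set α}

theorem integral_prod_sub_mul_sub (hf : Integrable f μ) (hg : Integrable g μ)
    (hfg : Integrable (f * g) μ) :
    ∫ p, (f p.2 - f p.1) * (g p.2 - g p.1) ∂μ.prod μ =
      2 * (μ.real univ * ∫ x, f x * g x ∂μ - (∫ x, f x ∂μ) * ∫ x, g x ∂μ) := by
  have h11 : Integrable (fun p : α × α => f p.1 * g p.1) (μ.prod μ) := hfg.comp_fst μ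
  have h22 : Integrable (fun p : α × α => f p.2 * g p.2) (μ.prod μ) := hfg.comp_snd μ
  have h12 : Integrable (fun p : α × α => f p.1 * g p.2) (μ.prod μ) := hf.mul_prod hg
  have h21 : Integrable (fun p : α × α => g p.1 * f p.2) (μ.prod μ) := hg.mul_prod hf
  calc ∫ p, (f p.2 - f p.1) * (g p.2 - g p.1) ∂μ.prod μ
      = ∫ p, (f p.2 * g p.2 + f p.1 * g p.1 - f p.1 * g p.2 - g p.1 * f p.2) ∂μ.prod μ := by
        congr 1; ext p; ring
    _ = _ := by
      rw [integral_sub (by exact (h22.add h11).sub h12) h21,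
        integral_sub (by exact h22.add h11) h12, integral_add h22 h11,
        integral_fun_snd (fun x => f x * g x), integral_fun_fst (fun x => f x * g x),
        integral_prod_mul, integral_prod_mul g f, smul_eq_mul]
      ring

theorem MonovaryOn.integral_mul_integral_le (hmono : MonovaryOn f g s)
    (hs : ∀ᵐ x ∂μ, x ∈ s) (hf : Integrable f μ) (hg : Integrable g μ) (hfg : Integrable (f * g) μ) :
    (∫ x, f x ∂μ) * ∫ x, g x ∂μ ≤ μ.real univ * ∫ x, f x * g x ∂μ := by
  have : 0 ≤ ∫ p, (f p.2 - f p.1) * (g p.2 - g p.1) ∂μ.prod μ := by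
    refine integral_nonneg_of_ae ?_
    filter_upwards [Measure.quasiMeasurePreserving_fst.ae hs,
      Measure.quasiMeasurePreserving_snd.ae hs] with p hp₁ hp₂
    exact hmono.sub_mul_sub_nonneg hp₁ hp₂
  rw [integral_prod_sub_mul_sub hf hg hfg] at this
  linarith

theorem AntivaryOn.integral_mul_le_integral_mul_integral (hanti : AntivaryOn f g s)
    (hs : ∀ᵐ x ∂μ, x ∈ s) (hf : Integrable f μ) (hg : Integrable g μ)
    (hfg : Integrable (f * g) μ) :
    μ.real univ * ∫ x, f x * g x ∂μ ≤ (∫ x, f x ∂μ) * ∫ x, g x ∂μ := by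
  have : ∫ p, (f p.2 - f p.1) * (g p.2 - g p.1) ∂μ.prod μ ≤ 0 := by
    refine integral_nonpos_of_ae ?_
    filter_upwards [Measure.quasiMeasurePreserving_fst.ae hs,
      Measure.quasiMeasurePreserving_snd.ae hs] with p hp₁ hp₂
    exact hanti.sub_mul_sub_nonpos hp₁ hp₂
  rw [integral_prod_sub_mul_sub hf hg hfg] at this
  linarith

end Chebyshev

section RpowMonovary

variable {ι : Type*} {u : ι → ℝ} {s : Set ι} {a b : ℝ}

theorem monovaryOn_rpow_rpow (hu : ∀ i ∈ s, 0 ≤ u i) (ha : 0 ≤ a) (hb : 0 < b) :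
    MonovaryOn (fun i => u i ^ a) (fun i => u i ^ b) s := by
  intro i hi j hj hij
  have hu_lt : u i < u j := (rpow_lt_rpow_iff (hu i hi) (hu j hj) hb).1 hij
  exact rpow_le_rpow (hu i hi) hu_lt.le ha

theorem antivaryOn_rpow_rpow (hu : ∀ i ∈ s, 0 < u i) (ha : a ≤ 0) (hb : 0 < b) :
    AntivaryOn (fun i => u i ^ a) (fun i => u i ^ b) s := by
  intro i hi j hj hij
  have hu_lt : u i < u j := (rpow_lt_rpow_iff (hu i hi).le (hu j hj).le hb).1 hij
  exact rpow_le_rpow_of_nonpos (hu i hi) hu_lt.le ha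

end RpowMonovary

theorem intervalIntegrable_one_sub_sq_rpow {α : ℝ} (hα : -1 < α) :
    IntervalIntegrable (fun t : ℝ => (1 - t ^ 2) ^ α) volume 0 1 := by
  have h_one_sub : IntervalIntegrable (fun t : ℝ => (1 - t) ^ α) volume 0 1 := by
    simpa using ((intervalIntegrable_rpow' (a := 0) (b := 1) hα).comp_sub_left 1).symm
  have h_one_add : ContinuousOn (fun t : ℝ => (1 + t) ^ α) (uIcc 0 1) := by
    refine ContinuousOn.rpow_const (by fun_prop) fun t ht => Or.inl ?_
    rw [uIcc_of_le zero_le_one] at ht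
    linarith [ht.1]
  refine (h_one_sub.mul_continuousOn h_one_add).congr_ae ?_
  rw [uIoc_of_le zero_le_one]
  filter_upwards [ae_restrict_mem measurableSet_Ioc] with t ht
  rw [show 1 - t ^ 2 = (1 - t) * (1 + t) by ring,
    mul_rpow (by linarith [ht.2]) (by linarith [ht.1])]

-- The open interval keeps `1 - t ^ 2 > 0`: at `t = 1` the junk value `0 ^ a = 0` for `a < 0`
-- would spoil the antitonicity of `(1 - t ^ 2) ^ a`.
noncomputable def expWeight (x : ℝ) : Measure ℝ :=
  (volume.restrict (Ioo 0 1)).withDensity fun t => ENNReal.ofReal (exp (-x * t))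

namespace expWeight

variable {x a b : ℝ}

instance : IsFiniteMeasure (expWeight x) :=
  isFiniteMeasure_withDensity_ofReal
    ((by fun_prop : Continuous fun t : ℝ => exp (-x * t)).integrableOn_Icc.mono_set
      Ioo_subset_Icc_self).hasFiniteIntegral

theorem ae_mem_Ioo : ∀ᵐ t ∂expWeight x, t ∈ Ioo 0 1 :=
  (withDensity_absolutelyContinuous _ _).ae_le (ae_restrict_mem measurableSet_Ioo)

theorem integral_eq (h : ℝ → ℝ) :
    ∫ t, h t ∂expWeight x = ∫ t in (0:ℝ)..1, h t * exp (-x * t) := by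
  rw [expWeight, integral_withDensity_eq_integral_toReal_smul (by fun_prop)
    (ae_of_all _ fun _ => ENNReal.ofReal_lt_top), integral_of_le zero_le_one,
    integral_Ioc_eq_integral_Ioo]
  congr 1 with t
  rw [ENNReal.toReal_ofReal (exp_nonneg _), smul_eq_mul, mul_comm]

theorem integrable_one_sub_sq_rpow {α : ℝ} (hα : -1 < α) :
    Integrable (fun t : ℝ => (1 - t ^ 2) ^ α) (expWeight x) := by
  rw [expWeight, integrable_withDensity_iff_integrable_smul' (by fun_prop)
    (ae_of_all _ fun _ => ENNReal.ofReal_lt_top)]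
  have := ((intervalIntegrable_one_sub_sq_rpow hα).continuousOn_mul
    (g := fun t => exp (-x * t)) (by fun_prop))
  rw [intervalIntegrable_iff_integrableOn_Ioo_of_le zero_le_one] at this
  refine this.congr_fun (fun t _ => ?_) measurableSet_Ioo
  rw [ENNReal.toReal_ofReal (exp_nonneg _), smul_eq_mul]

theorem one_sub_sq_rpow_mul_rpow_ae_eq :
    (fun t : ℝ => (1 - t ^ 2) ^ a * (1 - t ^ 2) ^ b) =ᵐ[expWeight x]
      fun t => (1 - t ^ 2) ^ (a + b) := by
  filter_upwards [ae_mem_Ioo] with t ht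
  rw [← rpow_add (by nlinarith [ht.1, ht.2])]

theorem integral_rpow_mul_integral_rpow_le (ha : 0 ≤ a) (hb : 0 < b) :
    (∫ t, (1 - t ^ 2) ^ a ∂expWeight x) * ∫ t, (1 - t ^ 2) ^ b ∂expWeight x ≤
      (expWeight x).real univ * ∫ t, (1 - t ^ 2) ^ (a + b) ∂expWeight x := by
  rw [← integral_congr_ae one_sub_sq_rpow_mul_rpow_ae_eq]
  refine MonovaryOn.integral_mul_integral_le
    (monovaryOn_rpow_rpow (s := Ioo 0 1) (fun t ht => ?_) ha hb) ae_mem_Ioo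
    (integrable_one_sub_sq_rpow (by linarith)) (integrable_one_sub_sq_rpow (by linarith))
    ((integrable_one_sub_sq_rpow (by linarith)).congr one_sub_sq_rpow_mul_rpow_ae_eq.symm)
  nlinarith [ht.1, ht.2]

theorem integral_rpow_le_integral_rpow_mul_integral_rpow (ha₁ : -1 < a) (ha : a ≤ 0)
    (hb : 0 < b) :
    (expWeight x).real univ * ∫ t, (1 - t ^ 2) ^ (a + b) ∂expWeight x ≤
      (∫ t, (1 - t ^ 2) ^ a ∂expWeight x) * ∫ t, (1 - t ^ 2) ^ b ∂expWeight x := by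
  rw [← integral_congr_ae one_sub_sq_rpow_mul_rpow_ae_eq]
  refine AntivaryOn.integral_mul_le_integral_mul_integral
    (antivaryOn_rpow_rpow (s := Ioo 0 1) (fun t ht => ?_) ha hb) ae_mem_Ioo
    (integrable_one_sub_sq_rpow ha₁) (integrable_one_sub_sq_rpow (by linarith))
    ((integrable_one_sub_sq_rpow (by linarith)).congr one_sub_sq_rpow_mul_rpow_ae_eq.symm)
  nlinarith [ht.1, ht.2]

end expWeight

theorem strM_eq_integral_expWeight (ν x : ℝ) :
    strM ν x = 2 / √π * ∫ t, (1 - t ^ 2) ^ (ν - 1 / 2) ∂expWeight x := by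
  rw [strM, expWeight.integral_eq]

theorem strM_half (x : ℝ) : strM (1 / 2) x = 2 / √π * (expWeight x).real univ := by
  simp [strM_eq_integral_expWeight]

theorem strM_product_ineq_general (ν x : ℝ) :
    (3 / 2 ≤ ν → strM (ν - 1) x * strM (ν + 1) x ≤ strM (1 / 2) x * strM (2 * ν - 1 / 2) x) ∧
    (1 / 2 < ν → ν < 3 / 2 →
      strM (1 / 2) x * strM (2 * ν - 1 / 2) x ≤ strM (ν - 1) x * strM (ν + 1) x) := by
  rw [strM_half, strM_eq_integral_expWeight (ν - 1), strM_eq_integral_expWeight (ν + 1),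
    strM_eq_integral_expWeight (2 * ν - 1 / 2), show ν - 1 - 1 / 2 = ν - 3 / 2 by ring,
    show ν + 1 - 1 / 2 = ν + 1 / 2 by ring,
    show 2 * ν - 1 / 2 - 1 / 2 = (ν - 3 / 2) + (ν + 1 / 2) by ring]
  refine ⟨fun hν => ?_, fun hν₁ hν₂ => ?_⟩
  · linear_combination mul_le_mul_of_nonneg_left
      (expWeight.integral_rpow_mul_integral_rpow_le (x := x) (a := ν - 3 / 2) (b := ν + 1 / 2)
        (by linarith) (by linarith)) (sq_nonneg (2 / √π))
  · linear_combination mul_le_mul_of_nonneg_left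
      (expWeight.integral_rpow_le_integral_rpow_mul_integral_rpow (x := x) (a := ν - 3 / 2)
        (b := ν + 1 / 2) (by linarith) (by linarith) (by linarith))
      (sq_nonneg (2 / √π))

theorem strM_product_ineq (ν x : ℝ) (hx : 0 < x) :
    (3 / 2 ≤ ν → strM (ν - 1) x * strM (ν + 1) x ≤ strM (1 / 2) x * strM (2 * ν - 1 / 2) x) ∧
    (1 / 2 < ν → ν < 3 / 2 →
      strM (1 / 2) x * strM (2 * ν - 1 / 2) x ≤ strM (ν - 1) x * strM (ν + 1) x) :=
  strM_product_ineq_general ν x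
end
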